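/- arXiv:2405.07890 — 2 statements merged into one kernel-verified Lean document; each statement's English description precedes it below -/
import Mathlib

section
/- Let A be a rank-r matrix with SVD A = UΣVᴴ (Σ ∈ ℝ^{r×r} positive diagonal). Then every matrix of the form G = UVᴴ + W with UᴴW = 0, WV = 0, and ‖W‖ ≤ 1 is a subgradient of the nuclear norm at A: for all Z, ‖Z‖_* ≥ ‖A‖_* + ⟨Z − A, G⟩_F. -/
/-!
With `G = U Vᵀ + W`, the conditions `Uᵀ W = 0` and `W V = 0` split `G x` into the orthogonal
pieces `U (Vᵀ x)` and `W (x - V Vᵀ x)`, so `G` is a contraction: `‖G‖ ≤ 1`. Trace duality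
`⟨Z, G⟩_F ≤ ‖G‖ ‖Z‖_*` then gives `⟨Z, G⟩_F ≤ ‖Z‖_*`. On the other hand `⟨A, G⟩_F = Tr Σ = ‖A‖_*`,
since `V Σ Vᵀ` is the positive square root of `Aᵀ A`. Subtracting yields the subgradient inequality.
-/

open Matrix

/-- Frobenius inner product of real square matrices. -/
def frobInner {n : ℕ} (A B : Matrix (Fin n) (Fin n) ℝ) : ℝ :=
  ∑ i, ∑ j, A i j * B i j

/-- Spectral (ℓ₂ operator) norm. -/
noncomputable def specNorm {n : ℕ} (A : Matrix (Fin n) (Fin n) ℝ) : ℝ :=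
  sSup ((fun x => Real.sqrt (∑ i, (A.mulVec x i) ^ 2)) ''
    {x : Fin n → ℝ | ∑ i, (x i) ^ 2 ≤ 1})

/-- Nuclear norm: trace of the positive semidefinite square root of `Aᴴ * A`. -/
noncomputable def nucNorm {n : ℕ} (A : Matrix (Fin n) (Fin n) ℝ) : ℝ :=
  ((Matrix.posSemidef_conjTranspose_mul_self A).1.eigenvectorUnitary.1 *
    diagonal ((RCLike.ofReal : ℝ → ℝ) ∘ Real.sqrt ∘ (Matrix.posSemidef_conjTranspose_mul_self A).1.eigenvalues) *
    (star (Matrix.posSemidef_conjTranspose_mul_self A).1.eigenvectorUnitary : Matrix (Fin n) (Fin n) ℝ)).trace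

open scoped Matrix.Norms.L2Operator

theorem EuclideanSpace.norm_toLp_sq_eq_dotProduct {ι : Type*} [Fintype ι] (x : ι → ℝ) :
    ‖WithLp.toLp 2 x‖ ^ 2 = x ⬝ᵥ x := by
  rw [EuclideanSpace.real_norm_sq_eq]
  simp [dotProduct, sq]

namespace Matrix

theorem mulVec_dotProduct_mulVec {m n l R : Type*} [Fintype m] [Fintype n] [Fintype l]
    [CommSemiring R] (A : Matrix m n R) (B : Matrix m l R) (v : n → R) (w : l → R) :
    (A *ᵥ v) ⬝ᵥ (B *ᵥ w) = v ⬝ᵥ ((Aᵀ * B) *ᵥ w) := by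
  rw [← mulVec_mulVec, mulVec_transpose, dotProduct_comm, dotProduct_mulVec, dotProduct_comm]

theorem trace_eq_sum_dotProduct_mulVec {n ι : Type*} [Fintype n] [DecidableEq n] [Fintype ι]
    (M : Matrix n n ℝ) (b : OrthonormalBasis ι ℝ (EuclideanSpace ℝ n)) :
    M.trace = ∑ k, ⇑(b k) ⬝ᵥ (M *ᵥ ⇑(b k)) := by
  rw [← trace_toLin_eq M (EuclideanSpace.basisFun n ℝ).toBasis,
    ← toEuclideanLin_eq_toLin_orthonormal, LinearMap.trace_eq_sum_inner _ b]
  simp [EuclideanSpace.inner_eq_star_dotProduct, toLpLin_apply, dotProduct_comm]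

section L2OpNorm

variable {m n r : Type*} [Fintype m] [Fintype n] [Fintype r] [DecidableEq n]

theorem mulVec_dotProduct_self_le (A : Matrix m n ℝ) (x : n → ℝ) :
    (A *ᵥ x) ⬝ᵥ (A *ᵥ x) ≤ ‖A‖ ^ 2 * (x ⬝ᵥ x) := by
  rw [← EuclideanSpace.norm_toLp_sq_eq_dotProduct, ← EuclideanSpace.norm_toLp_sq_eq_dotProduct,
    ← mul_pow]
  gcongr
  simpa using A.l2_opNorm_mulVec (WithLp.toLp 2 x)

theorem l2_opNorm_le_one_of_dotProduct_le {A : Matrix m n ℝ}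
    (h : ∀ x, (A *ᵥ x) ⬝ᵥ (A *ᵥ x) ≤ x ⬝ᵥ x) : ‖A‖ ≤ 1 := by
  rw [l2_opNorm_def]
  refine ContinuousLinearMap.opNorm_le_bound _ zero_le_one fun x => ?_
  rw [one_mul, ← sq_le_sq₀ (norm_nonneg _) (norm_nonneg _)]
  simpa [← EuclideanSpace.norm_toLp_sq_eq_dotProduct, toLpLin_apply] using h x.ofLp

theorem l2_opNorm_mul_transpose_add_le_one [DecidableEq r] {U : Matrix m r ℝ}
    {V : Matrix n r ℝ} {W : Matrix m n ℝ} (hU : Uᵀ * U = 1) (hV : Vᵀ * V = 1)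
    (hUW : Uᵀ * W = 0) (hWV : W * V = 0) (hW : ‖W‖ ≤ 1) : ‖U * Vᵀ + W‖ ≤ 1 := by
  refine l2_opNorm_le_one_of_dotProduct_le fun x => ?_
  set a := Vᵀ *ᵥ x
  set y := x - V *ᵥ a
  have hGx : (U * Vᵀ + W) *ᵥ x = U *ᵥ a + W *ᵥ y := by
    rw [mulVec_sub, mulVec_mulVec a W V, hWV, zero_mulVec, sub_zero, add_mulVec, mulVec_mulVec]
  have hUa : (U *ᵥ a) ⬝ᵥ (U *ᵥ a) = a ⬝ᵥ a := by
    rw [mulVec_dotProduct_mulVec, hU, one_mulVec]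
  have hUa_Wy : (U *ᵥ a) ⬝ᵥ (W *ᵥ y) = 0 := by
    rw [mulVec_dotProduct_mulVec, hUW, zero_mulVec, dotProduct_zero]
  have hVa : (V *ᵥ a) ⬝ᵥ (V *ᵥ a) = a ⬝ᵥ a := by
    rw [mulVec_dotProduct_mulVec, hV, one_mulVec]
  have hx_Va : x ⬝ᵥ (V *ᵥ a) = a ⬝ᵥ a := by
    rw [dotProduct_mulVec, ← mulVec_transpose]
  have hy : y ⬝ᵥ y = x ⬝ᵥ x - a ⬝ᵥ a := by
    simp only [y, sub_dotProduct, dotProduct_sub, hVa, hx_Va, dotProduct_comm (V *ᵥ a) x]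
    ring
  have hWy : (W *ᵥ y) ⬝ᵥ (W *ᵥ y) ≤ y ⬝ᵥ y :=
    (mulVec_dotProduct_self_le W y).trans
      (mul_le_of_le_one_left (dotProduct_self_star_nonneg y) (pow_le_one₀ (norm_nonneg W) hW))
  calc ((U * Vᵀ + W) *ᵥ x) ⬝ᵥ ((U * Vᵀ + W) *ᵥ x)
      = a ⬝ᵥ a + (W *ᵥ y) ⬝ᵥ (W *ᵥ y) := by
        rw [hGx, add_dotProduct, dotProduct_add, dotProduct_add, hUa, hUa_Wy,
          dotProduct_comm (W *ᵥ y), hUa_Wy]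
        ring
    _ ≤ x ⬝ᵥ x := by linarith

end L2OpNorm

end Matrix

theorem specNorm_eq_l2_opNorm {n : ℕ} (W : Matrix (Fin n) (Fin n) ℝ) : specNorm W = ‖W‖ := by
  rw [cstar_norm_def, ← ContinuousLinearMap.sSup_unitClosedBall_eq_norm, specNorm]
  congr 1
  ext t
  simp only [Set.mem_image, Set.mem_ofPred_eq, Metric.mem_closedBall, dist_zero_right]
  constructor
  · rintro ⟨x, hx, rfl⟩
    refine ⟨WithLp.toLp 2 x, ?_, ?_⟩
    · rw [EuclideanSpace.norm_eq]; simpa using hx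
    · rw [EuclideanSpace.norm_eq]; simp
  · rintro ⟨y, hy, rfl⟩
    refine ⟨y.ofLp, ?_, ?_⟩
    · rw [EuclideanSpace.norm_eq] at hy; simpa using hy
    · rw [EuclideanSpace.norm_eq]; simp

theorem frobInner_eq_trace {n : ℕ} (A B : Matrix (Fin n) (Fin n) ℝ) :
    frobInner A B = (Aᵀ * B).trace := by
  simp only [frobInner, trace, diag_apply, mul_apply, transpose_apply]
  exact Finset.sum_comm

theorem frobInner_sub_left {n : ℕ} (A B C : Matrix (Fin n) (Fin n) ℝ) :
    frobInner (A - B) C = frobInner A C - frobInner B C := by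
  simp only [frobInner, Matrix.sub_apply, sub_mul, Finset.sum_sub_distrib]

theorem frobInner_eq_sum_mulVec_dotProduct {n : ℕ} {ι : Type*} [Fintype ι]
    (A B : Matrix (Fin n) (Fin n) ℝ) (b : OrthonormalBasis ι ℝ (EuclideanSpace ℝ (Fin n))) :
    frobInner A B = ∑ k, (A *ᵥ ⇑(b k)) ⬝ᵥ (B *ᵥ ⇑(b k)) := by
  rw [frobInner_eq_trace, trace_eq_sum_dotProduct_mulVec _ b]
  simp only [mulVec_dotProduct_mulVec]

theorem nucNorm_eq_sum_sqrt_eigenvalues {n : ℕ} (A : Matrix (Fin n) (Fin n) ℝ) :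
    nucNorm A = ∑ k, √((posSemidef_conjTranspose_mul_self A).1.eigenvalues k) := by
  rw [nucNorm, trace_mul_comm, ← mul_assoc, Unitary.coe_star_mul_self, one_mul, trace_diagonal]
  rfl

theorem nucNorm_nonneg {n : ℕ} (A : Matrix (Fin n) (Fin n) ℝ) : 0 ≤ nucNorm A := by
  rw [nucNorm_eq_sum_sqrt_eigenvalues]
  exact Finset.sum_nonneg fun k _ => Real.sqrt_nonneg _

/-- Computing the trace in an orthonormal eigenbasis `q` of `Zᵀ Z`, each term `⟪Z q, G q⟫` is at
most `‖Z q‖ ‖G q‖ ≤ √λ ‖G‖` by Cauchy–Schwarz. -/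
theorem frobInner_le_l2_opNorm_mul_nucNorm {n : ℕ} (Z G : Matrix (Fin n) (Fin n) ℝ) :
    frobInner Z G ≤ ‖G‖ * nucNorm Z := by
  set hZ := (posSemidef_conjTranspose_mul_self Z).1
  set q := fun k => ⇑(hZ.eigenvectorBasis k)
  rw [frobInner_eq_sum_mulVec_dotProduct Z G hZ.eigenvectorBasis,
    nucNorm_eq_sum_sqrt_eigenvalues, Finset.mul_sum]
  refine Finset.sum_le_sum fun k _ => ?_
  have hq : ‖WithLp.toLp 2 (q k)‖ = 1 := hZ.eigenvectorBasis.orthonormal.1 k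
  have hZq : ‖WithLp.toLp 2 (Z *ᵥ q k)‖ = √(hZ.eigenvalues k) := by
    rw [← Real.sqrt_sq (norm_nonneg _), EuclideanSpace.norm_toLp_sq_eq_dotProduct,
      mulVec_dotProduct_mulVec, ← conjTranspose_eq_transpose_of_trivial,
      hZ.mulVec_eigenvectorBasis, dotProduct_smul, ← EuclideanSpace.norm_toLp_sq_eq_dotProduct, hq]
    simp
  have hGq : ‖WithLp.toLp 2 (G *ᵥ q k)‖ ≤ ‖G‖ := by
    simpa [hq] using G.l2_opNorm_mulVec (WithLp.toLp 2 (q k))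
  calc (Z *ᵥ q k) ⬝ᵥ (G *ᵥ q k)
      ≤ ‖WithLp.toLp 2 (Z *ᵥ q k)‖ * ‖WithLp.toLp 2 (G *ᵥ q k)‖ := by
        simpa [EuclideanSpace.inner_toLp_toLp, dotProduct_comm] using
          real_inner_le_norm (WithLp.toLp 2 (Z *ᵥ q k)) (WithLp.toLp 2 (G *ᵥ q k))
    _ ≤ ‖G‖ * √(hZ.eigenvalues k) := by
        rw [hZq, mul_comm]
        gcongr

open scoped MatrixOrder in
theorem nucNorm_eq_trace_of_sq_eq {n : ℕ} {A B : Matrix (Fin n) (Fin n) ℝ} (hB : B.PosSemidef)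
    (h : B ^ 2 = Aᴴ * A) : nucNorm A = B.trace := by
  have hA := posSemidef_conjTranspose_mul_self A
  have hsqrt := (CFC.sqrt_eq_iff (Aᴴ * A) B hA.nonneg hB.nonneg).mpr (by rw [← h, sq])
  rw [← hsqrt, CFC.sqrt_eq_real_sqrt (Aᴴ * A) hA.nonneg, cfcₙ_eq_cfc, hA.1.cfc_eq,
    IsHermitian.cfc, Unitary.conjStarAlgAut_apply]
  rfl

section SVD

variable {n : ℕ} {r : Type*} [Fintype r] [DecidableEq r]

theorem trace_mul_diagonal_mul_transpose {V : Matrix (Fin n) r ℝ} (hV : Vᵀ * V = 1)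
    (σ : r → ℝ) : (V * diagonal σ * Vᵀ).trace = ∑ i, σ i := by
  rw [trace_mul_comm, ← Matrix.mul_assoc, hV, Matrix.one_mul, trace_diagonal]

theorem nucNorm_mul_diagonal_mul_transpose {U V : Matrix (Fin n) r ℝ} (hU : Uᵀ * U = 1)
    (hV : Vᵀ * V = 1) {σ : r → ℝ} (hσ : 0 ≤ σ) :
    nucNorm (U * diagonal σ * Vᵀ) = ∑ i, σ i := by
  have hB : (V * diagonal σ * Vᵀ).PosSemidef := by
    simpa using (PosSemidef.diagonal hσ).mul_mul_conjTranspose_same V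
  rw [nucNorm_eq_trace_of_sq_eq hB, trace_mul_diagonal_mul_transpose hV]
  simp only [sq, conjTranspose_eq_transpose_of_trivial, transpose_mul, transpose_transpose,
    diagonal_transpose, Matrix.mul_assoc]
  rw [← Matrix.mul_assoc Vᵀ V, hV, ← Matrix.mul_assoc Uᵀ U, hU, Matrix.one_mul]

theorem frobInner_mul_diagonal_mul_transpose {U V : Matrix (Fin n) r ℝ} (hU : Uᵀ * U = 1)
    (hV : Vᵀ * V = 1) (σ : r → ℝ) {W : Matrix (Fin n) (Fin n) ℝ} (hUW : Uᵀ * W = 0) :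
    frobInner (U * diagonal σ * Vᵀ) (U * Vᵀ + W) = ∑ i, σ i := by
  have hUG : Uᵀ * (U * Vᵀ + W) = Vᵀ := by
    rw [Matrix.mul_add, ← Matrix.mul_assoc, hU, hUW, Matrix.one_mul, add_zero]
  rw [frobInner_eq_trace, ← trace_mul_diagonal_mul_transpose hV σ]
  simp only [transpose_mul, transpose_transpose, diagonal_transpose, Matrix.mul_assoc, hUG]

end SVD

theorem nuclear_norm_subgradient (n r : ℕ)
    (U V : Matrix (Fin n) (Fin r) ℝ) (hU : Uᵀ * U = 1) (hV : Vᵀ * V = 1)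
    (σ : Fin r → ℝ) (hσ : ∀ i, 0 < σ i)
    (A : Matrix (Fin n) (Fin n) ℝ) (hA : A = U * Matrix.diagonal σ * Vᵀ)
    (W : Matrix (Fin n) (Fin n) ℝ)
    (hUW : Uᵀ * W = 0) (hWV : W * V = 0) (hW : specNorm W ≤ 1)
    (G : Matrix (Fin n) (Fin n) ℝ) (hG : G = U * Vᵀ + W) :
    ∀ Z : Matrix (Fin n) (Fin n) ℝ,
      nucNorm Z ≥ nucNorm A + frobInner (Z - A) G := by
  intro Z
  subst hA hG
  have hG_le : ‖U * Vᵀ + W‖ ≤ 1 :=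
    l2_opNorm_mul_transpose_add_le_one hU hV hUW hWV (specNorm_eq_l2_opNorm W ▸ hW)
  have hdual : frobInner Z (U * Vᵀ + W) ≤ nucNorm Z :=
    (frobInner_le_l2_opNorm_mul_nucNorm Z _).trans
      (mul_le_of_le_one_left (nucNorm_nonneg Z) hG_le)
  rw [frobInner_sub_left, nucNorm_mul_diagonal_mul_transpose hU hV fun i => (hσ i).le,
    frobInner_mul_diagonal_mul_transpose hU hV σ hUW]
  linarith
end

section
/- Let ℛ be a linear operator on matrix space such that ⟨Z, (ℛ∘ℛ)(Z)⟩ ≥ ⟨Z, ℛ(Z)⟩ for all Z, and let 𝒫_T be an orthogonal projection with ‖𝒫_T − 𝒫_T∘ℛ∘𝒫_T‖_{F→F} ≤ 1/2. Then for every Ψ, ‖ℛ(𝒫_T(Ψ))‖_F² ≥ (1/2)‖𝒫_T(Ψ)‖_F². -/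
section

open scoped RealInnerProductSpace

variable {E : Type*} [NormedAddCommGroup E] [InnerProductSpace ℝ E]

theorem LinearMap.IsSymmetric.inner_map_self_le_norm_map_sq {R : E →ₗ[ℝ] E}
    (hR : R.IsSymmetric) {z : E} (hz : ⟪z, R z⟫ ≤ ⟪z, R (R z)⟫) :
    ⟪z, R z⟫ ≤ ‖R z‖ ^ 2 := by
  rwa [← real_inner_self_eq_norm_sq, hR]

theorem LinearMap.IsSymmetric.mul_norm_sq_le_inner_map_self {P : E →ₗ[ℝ] E}
    (hP : P.IsSymmetric) (R : E →ₗ[ℝ] E) {z : E} (hPz : P z = z) {c : ℝ}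
    (hc : ‖z - P (R z)‖ ≤ c * ‖z‖) :
    (1 - c) * ‖z‖ ^ 2 ≤ ⟪z, R z⟫ := by
  have hcs : ⟪z, z - P (R z)⟫ ≤ c * ‖z‖ ^ 2 :=
    calc ⟪z, z - P (R z)⟫ ≤ ‖z‖ * ‖z - P (R z)‖ := real_inner_le_norm _ _
      _ ≤ ‖z‖ * (c * ‖z‖) := mul_le_mul_of_nonneg_left hc (norm_nonneg z)
      _ = c * ‖z‖ ^ 2 := by ring
  calc (1 - c) * ‖z‖ ^ 2 ≤ ‖z‖ ^ 2 - ⟪z, z - P (R z)⟫ := by linarith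
    _ = ⟪z, P (R z)⟫ := by rw [inner_sub_right, real_inner_self_eq_norm_sq]; ring
    _ = ⟪z, R z⟫ := by rw [← hP, hPz]

end

theorem sampling_operator_lower_bound
    {E : Type*} [NormedAddCommGroup E] [InnerProductSpace ℝ E]
    (P R : E →ₗ[ℝ] E)
    (hPproj : ∀ x, P (P x) = P x)
    (hPsa : ∀ x y, (inner ℝ (P x) y : ℝ) = inner ℝ x (P y))
    (hRsa : ∀ x y, (inner ℝ (R x) y : ℝ) = inner ℝ x (R y))
    (hRR : ∀ z, (inner ℝ z (R (R z)) : ℝ) ≥ inner ℝ z (R z))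
    (hcontr : ∀ z, ‖P z - P (R (P z))‖ ≤ (1 / 2) * ‖z‖) :
    ∀ ψ : E, (1 / 2) * ‖P ψ‖ ^ 2 ≤ ‖R (P ψ)‖ ^ 2 := by
  intro ψ
  have hPz : P (P ψ) = P ψ := hPproj ψ
  have hc := hcontr (P ψ)
  rw [hPz] at hc
  have hlower := LinearMap.IsSymmetric.mul_norm_sq_le_inner_map_self hPsa R hPz hc
  have hupper := LinearMap.IsSymmetric.inner_map_self_le_norm_map_sq hRsa (hRR (P ψ))
  linarith
end
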